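/- Let (W,S) be a Coxeter system, u ∈ W, and 𝔍 = { w ∈ W : w ≤_L u } (the left weak order ideal generated by u). Suppose 𝔍 is a W-graph ideal with respect to J ⊆ S. If w ∈ 𝔍 and s is a weak ascent of w (i.e., sw ∈ D_J \ 𝔍), then every y ∈ 𝔍 with y < sw in Bruhat order satisfies y ≤ w. -/

import Mathlib

open LaurentPolynomial Polynomial

noncomputable section

namespace WGI

/-- The ring `A = ℤ[q,q⁻¹]` of Laurent polynomials. -/
abbrev A : Type := LaurentPolynomial ℤ

/-- The indeterminate `q`. -/
def Q : A := LaurentPolynomial.T 1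

/-- The element `q⁻¹`. -/
def Qi : A := LaurentPolynomial.T (-1)

variable {B W : Type} [Group W] {M : CoxeterMatrix B} (cs : CoxeterSystem M W)

/-- One step of the relation generating the Bruhat order: `w = tu` for a reflection `t`
(or `t = 1`) and `l(u) ≤ l(w)`. -/
def BStep (u w : W) : Prop :=
  cs.length u ≤ cs.length w ∧ ∃ t : W, (cs.IsReflection t ∨ t = 1) ∧ w = t * u

/-- The Bruhat order on `W`: the transitive (and reflexive) closure of `BStep`. -/
def BrLe (u w : W) : Prop := Relation.ReflTransGen (BStep cs) u w

/-- Strict Bruhat order. -/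
def BrLt (u w : W) : Prop := BrLe cs u w ∧ u ≠ w

/-- The left weak order: `u ≤_L w` iff `l(wu⁻¹) = l(w) - l(u)`, i.e. `u` is a suffix of `w`. -/
def WkLe (u w : W) : Prop := cs.length (w * u⁻¹) + cs.length u = cs.length w

/-- Strict left weak order. -/
def WkLt (u w : W) : Prop := WkLe cs u w ∧ u ≠ w

/-- An ideal of `(W, ≤_L)`: a subset closed under taking suffixes. -/
def IsIdealWk (I : Set W) : Prop := ∀ u w : W, WkLe cs u w → w ∈ I → u ∈ I

/-- The set `D_J` of minimal left coset representatives of `W_J`. -/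
def DD (J : Set B) : Set W := { w | ∀ j ∈ J, cs.length w < cs.length (w * cs.simple j) }

/-- Strong ascent: `sw > w` and `sw ∈ I`. -/
def SA (I : Set W) (s : B) (w : W) : Prop :=
  cs.length w < cs.length (cs.simple s * w) ∧ cs.simple s * w ∈ I

/-- Strong descent: `sw < w`. -/
def SD (s : B) (w : W) : Prop := cs.length (cs.simple s * w) < cs.length w

/-- Weak ascent: `sw > w` and `sw ∈ D_J \ I`. -/
def WA (I : Set W) (J : Set B) (s : B) (w : W) : Prop :=
  cs.length w < cs.length (cs.simple s * w) ∧ cs.simple s * w ∈ DD cs J \ I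

/-- Weak descent: `sw > w` and `sw ∉ D_J`. -/
def WD (J : Set B) (s : B) (w : W) : Prop :=
  cs.length w < cs.length (cs.simple s * w) ∧ cs.simple s * w ∉ DD cs J

/-- Descents: strong or weak. -/
def Desc (J : Set B) (s : B) (w : W) : Prop := SD cs s w ∨ WD cs J s w

/-- Ascents: strong or weak. -/
def Asc (I : Set W) (J : Set B) (s : B) (w : W) : Prop := SA cs I s w ∨ WA cs I J s w

/-- The data making the ideal `I` (of the left weak order, contained in `D_J`) a
`W`-graph ideal with respect to `J`: an `H(W)`-module (a module together with operators
`T s` satisfying the quadratic and braid relations of the Hecke algebra) which is free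
over `A` with basis indexed by `I`, on which the generators act by the four-case formula
of Definition 5.2, together with a compatible semilinear bar involution fixing `b₁`. -/
structure WGModule (I : Set W) (J : Set B) where
  V : Type
  [acg : AddCommGroup V]
  [mod : Module A V]
  ideal : IsIdealWk cs I
  subset : I ⊆ DD cs J
  one_mem : (1 : W) ∈ I
  bas : Module.Basis I A V
  T : B → V →ₗ[A] V
  quad : ∀ s : B, (T s) ∘ₗ (T s) = LinearMap.id + (Q - Qi) • T s
  braid : ∀ s t : B,
    ((CoxeterSystem.alternatingWord s t (M s t)).map fun i => (T i : Module.End A V)).prod =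
    ((CoxeterSystem.alternatingWord t s (M s t)).map fun i => (T i : Module.End A V)).prod
  /-- the polynomials `r^s_{y,w}` (divided by `q`, as elements of `ℤ[q]` with zero constant
  term they are recorded in `qℤ[q]` via `r_const`); `r s w y` is `r^s_{y,w}`. -/
  r : B → I → (I →₀ Polynomial ℤ)
  r_const : ∀ (s : B) (w y : I), ((r s w) y).coeff 0 = 0
  r_supp : ∀ (s : B) (w y : I), (r s w) y ≠ 0 → BrLt cs (y : W) (cs.simple s * (w : W))
  act_SA : ∀ (s : B) (w : I) (h : SA cs I s (w : W)),
    T s (bas w) = bas ⟨cs.simple s * (w : W), h.2⟩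
  act_SD : ∀ (s : B) (w : I), SD cs s (w : W) → ∀ h' : cs.simple s * (w : W) ∈ I,
    T s (bas w) = bas ⟨cs.simple s * (w : W), h'⟩ + (Q - Qi) • bas w
  act_WD : ∀ (s : B) (w : I), WD cs J s (w : W) → T s (bas w) = -Qi • bas w
  act_WA : ∀ (s : B) (w : I), WA cs I J s (w : W) →
    T s (bas w) = Q • bas w - (r s w).sum fun y p => (Polynomial.toLaurent p) • bas y
  bar : V → V
  bar_add : ∀ x y : V, bar (x + y) = bar x + bar y
  bar_smul : ∀ (a : A) (x : V), bar (a • x) = (LaurentPolynomial.invert a) • bar x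
  bar_one : bar (bas ⟨(1 : W), one_mem⟩) = bas ⟨(1 : W), one_mem⟩
  bar_T : ∀ (s : B) (x : V), bar (T s x) = T s (bar x) - (Q - Qi) • bar x

attribute [instance] WGModule.acg WGModule.mod

/-- `I` is a `W`-graph ideal with respect to `J`. -/
def IsWGraphIdeal (I : Set W) (J : Set B) : Prop := Nonempty (WGModule cs I J)


open scoped Classical

/-!
Write `u = v * w` and `u = x * y` with additive lengths. The proof is by induction on `ℓ w`.
A right descent `r` of `w` is also one of `u`; replacing `u`, `w` by `u r`, `w r`, and `y` by
whichever of `y`, `y r` has `r` as an ascent, keeps `v`, hence `v s > v`, and all other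
hypotheses, by the lifting property of the Bruhat order. At `w = 1` the hypothesis `v s > v`
says that `s` is not a suffix of `u`, so `y < s` forces `y = 1`.

The lifting property follows from Deodhar's property Z for a single Bruhat step, which rests on
the strong exchange condition. That in turn comes from the action of `W` on `W × {±1}` in which
`s` acts by `(t, ε) ↦ (s t s, ±ε)`, the sign flipping exactly when `t = s`: the sign it attaches
to `(w, t)` is `-1` exactly when the reflection `t` is a right inversion of `w`.
-/

section

open CoxeterSystem

local prefix:100 "ℓ" => cs.length
local prefix:100 "σ" => cs.simple
local prefix:100 "π" => cs.wordProd
local prefix:100 "ris" => cs.rightInvSeq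
local prefix:100 "lis" => cs.leftInvSeq

def signFlip (i : B) : Equiv.Perm (W × ℤˣ) :=
  Function.Involutive.toPerm (fun p ↦ (σ i * p.1 * σ i, if p.1 = σ i then -p.2 else p.2)) <| by
    rintro ⟨t, e⟩
    have hconj : σ i * t * σ i = σ i ↔ t = σ i := by
      simpa [cs.inv_simple] using (MulAut.conj (σ i)).injective.eq_iff (a := t) (b := σ i)
    simp only [hconj, Prod.mk.injEq]
    split_ifs <;> simp [mul_assoc, cs.simple_mul_simple_cancel_left]

theorem signFlip_apply (i : B) (t : W) (e : ℤˣ) :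
    signFlip cs i (t, e) = (σ i * t * σ i, if t = σ i then -e else e) := rfl

theorem prod_map_signFlip_apply (ω : List B) (t : W) (e : ℤˣ) :
    (ω.map (signFlip cs)).prod (t, e) = (π ω * t * (π ω)⁻¹, (-1) ^ (ris ω).count t * e) := by
  induction ω generalizing t e with
  | nil => simp
  | cons i ω ih =>
    rw [List.map_cons, List.prod_cons, Equiv.Perm.mul_apply, ih, signFlip_apply, wordProd_cons,
      rightInvSeq, List.count_cons]
    have hconj : π ω * t * (π ω)⁻¹ = σ i ↔ (π ω)⁻¹ * σ i * π ω = t := by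
      constructor
      · intro h; rw [← h]; group
      · rintro rfl; group
    refine Prod.ext ?_ ?_
    · simp only [mul_inv_rev, cs.inv_simple]; group
    · simp only [beq_iff_eq]
      rw [if_congr hconj rfl rfl]
      split_ifs <;> simp [pow_succ]

theorem prod_map_reverse_alternatingWord {G : Type*} [Monoid G] (f : B → G) (i i' : B) (m : ℕ) :
    ((alternatingWord i' i (2 * m)).reverse.map f).prod = (f i * f i') ^ m := by
  induction m with
  | zero => simp [alternatingWord]
  | succ m ih =>
    rw [show 2 * (m + 1) = 2 * m + 1 + 1 by ring, alternatingWord_succ, alternatingWord_succ]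
    simp only [List.concat_eq_append, List.reverse_append, List.reverse_cons, List.reverse_nil,
      List.nil_append, List.cons_append, List.map_cons, List.prod_cons, ih,
      pow_succ', mul_assoc]

theorem wordProd_alternatingWord_two_mul_add_one (i i' : B) (k : ℕ) :
    π (alternatingWord i i' (2 * k + 1)) = σ i' * (σ i * σ i') ^ k := by
  rw [prod_alternatingWord_eq_mul_pow, if_neg (by simp), Nat.add_div_of_dvd_right (by simp)]
  simp

theorem leftInvSeq_alternatingWord_eq_append (i i' : B) :
    lis (alternatingWord i' i (2 * M i i')) =
      (lis (alternatingWord i' i (2 * M i i'))).take (M i i') ++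
        (lis (alternatingWord i' i (2 * M i i'))).take (M i i') := by
  conv_lhs => rw [← List.take_append_drop (M i i') (lis _)]
  congr 1
  apply List.ext_getElem (by simp; omega)
  intro k hk hk'
  simp only [List.getElem_drop, List.getElem_take]
  rw [getElem_leftInvSeq_alternatingWord cs i' i _ _ (by simp at hk; omega),
    getElem_leftInvSeq_alternatingWord cs i' i _ _ (by simp at hk'; omega),
    wordProd_alternatingWord_two_mul_add_one, wordProd_alternatingWord_two_mul_add_one,
    pow_add, cs.simple_mul_simple_pow, one_mul]

theorem isLiftable_signFlip : M.IsLiftable (signFlip cs) := by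
  intro i i'
  ext ⟨t, e⟩ : 1
  have hπ : π (alternatingWord i' i (2 * M i i')).reverse = 1 := by
    rw [wordProd_reverse, prod_alternatingWord_eq_mul_pow, if_pos (by simp),
      Nat.mul_div_cancel_left _ two_pos, cs.simple_mul_simple_pow']
    simp
  have hcount : Even ((ris (alternatingWord i' i (2 * M i i')).reverse).count t) := by
    rw [rightInvSeq_reverse, List.count_reverse, leftInvSeq_alternatingWord_eq_append,
      List.count_append]
    exact ⟨_, rfl⟩
  rw [← prod_map_reverse_alternatingWord, prod_map_signFlip_apply, hπ, hcount.neg_one_pow]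
  simp

def signRep : W →* Equiv.Perm (W × ℤˣ) := cs.lift ⟨signFlip cs, isLiftable_signFlip cs⟩

theorem signRep_wordProd (ω : List B) : signRep cs (π ω) = (ω.map (signFlip cs)).prod := by
  rw [wordProd, map_list_prod, List.map_map]
  congr 1
  exact List.map_congr_left fun i _ ↦ cs.lift_apply_simple (isLiftable_signFlip cs) i

def inversionSign (w t : W) : ℤˣ := (signRep cs w (t, 1)).2

theorem inversionSign_wordProd (ω : List B) (t : W) :
    inversionSign cs (π ω) t = (-1) ^ (ris ω).count t := by
  simp [inversionSign, signRep_wordProd, prod_map_signFlip_apply]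

theorem signRep_apply (w t : W) (e : ℤˣ) :
    signRep cs w (t, e) = (w * t * w⁻¹, inversionSign cs w t * e) := by
  obtain ⟨ω, rfl⟩ := cs.wordProd_surjective w
  simp only [inversionSign, signRep_wordProd, prod_map_signFlip_apply, mul_one]

theorem inversionSign_mul (w₁ w₂ t : W) :
    inversionSign cs (w₁ * w₂) t =
      inversionSign cs w₁ (w₂ * t * w₂⁻¹) * inversionSign cs w₂ t := by
  rw [inversionSign, map_mul, Equiv.Perm.mul_apply, signRep_apply, signRep_apply, mul_one]

theorem inversionSign_self {t : W} (ht : cs.IsReflection t) : inversionSign cs t t = -1 := by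
  obtain ⟨v, i, rfl⟩ := ht
  have hconj : v⁻¹ * (v * σ i * v⁻¹) * v⁻¹⁻¹ = σ i := by group
  have hsimple : inversionSign cs (σ i) (σ i) = -1 := by
    simpa using inversionSign_wordProd cs [i] (σ i)
  have hone := inversionSign_mul cs v v⁻¹ (v * σ i * v⁻¹)
  rw [mul_inv_cancel, hconj, show inversionSign cs 1 (v * σ i * v⁻¹) = 1 by simp [inversionSign]]
    at hone
  rw [inversionSign_mul, hconj, inversionSign_mul, mul_inv_cancel_right, hsimple, mul_comm _ (-1),
    mul_assoc, ← hone, mul_one]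

theorem inversionSign_eq_neg_one_iff {w t : W} (ht : cs.IsReflection t) :
    inversionSign cs w t = -1 ↔ ℓ (w * t) < ℓ w := by
  constructor
  · intro h
    obtain ⟨ω, hω, rfl⟩ := cs.exists_isReduced w
    have hmem : t ∈ ris ω := by
      by_contra hmem
      simp [inversionSign_wordProd, List.count_eq_zero.mpr hmem] at h
    exact (cs.isRightInversion_of_mem_rightInvSeq hω hmem).2
  · intro h
    obtain ⟨α, hα, hαw⟩ := cs.exists_isReduced (w * t)
    have hw : w = π α * t := by rw [← hαw, mul_assoc, ht.mul_self, mul_one]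
    have hmem : t ∉ ris α := fun hmem ↦ by
      have := (cs.isRightInversion_of_mem_rightInvSeq hα hmem).2
      rw [← hw, ← hαw] at this
      omega
    rw [hw, inversionSign_mul, mul_inv_cancel_right, inversionSign_self cs ht,
      inversionSign_wordProd, List.count_eq_zero.mpr hmem, pow_zero, one_mul]

theorem mem_rightInvSeq_of_length_mul_lt {ω : List B} {t : W} (ht : cs.IsReflection t)
    (h : ℓ (π ω * t) < ℓ (π ω)) : t ∈ ris ω := by
  have hsign := (inversionSign_eq_neg_one_iff cs ht).mpr h
  by_contra hmem
  simp [inversionSign_wordProd, List.count_eq_zero.mpr hmem] at hsign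

theorem BrLe.refl (x : W) : BrLe cs x x := Relation.ReflTransGen.refl

variable {cs}

theorem BrLe.trans {x y z : W} (hxy : BrLe cs x y) (hyz : BrLe cs y z) : BrLe cs x z :=
  Relation.ReflTransGen.trans hxy hyz

theorem BrLe.length_le {x y : W} (h : BrLe cs x y) : ℓ x ≤ ℓ y := by
  induction h with
  | refl => rfl
  | tail _ hstep ih => exact ih.trans hstep.1

theorem BrLe.eq_of_length_le {x y : W} (h : BrLe cs x y) (hl : ℓ y ≤ ℓ x) : x = y := by
  induction h using Relation.ReflTransGen.head_induction_on with
  | refl => rfl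
  | @head a _ hstep hrest ih =>
    obtain ⟨hlen, t, ht | rfl, rfl⟩ := hstep
    · have := ht.length_mul_right_ne a
      have := BrLe.length_le hrest
      omega
    · simpa using ih (by simpa using hl)

variable (cs)

theorem brLe_isReflection_mul {x t : W} (ht : cs.IsReflection t) (h : ℓ x ≤ ℓ (t * x)) :
    BrLe cs x (t * x) :=
  .single ⟨h, t, .inl ht, rfl⟩

theorem brLe_mul_simple {x : W} {r : B} (h : ℓ x < ℓ (x * σ r)) : BrLe cs x (x * σ r) := by
  have hx : x * σ r = (x * σ r * x⁻¹) * x := by group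
  rw [hx] at h ⊢
  exact brLe_isReflection_mul cs ((cs.isReflection_simple r).conj x) h.le

theorem mul_simple_brLe {x : W} {r : B} (h : ℓ (x * σ r) < ℓ x) : BrLe cs (x * σ r) x := by
  simpa [cs.simple_mul_simple_cancel_right] using
    brLe_mul_simple cs (x := x * σ r) (r := r) (by simpa [cs.simple_mul_simple_cancel_right])

theorem eq_mul_simple_of_isReflection_mul {x t : W} {r : B} (ht : cs.IsReflection t)
    (hx : ℓ x < ℓ (t * x)) (hr : ℓ (t * x * σ r) < ℓ (x * σ r)) : x = t * x * σ r := by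
  -- By strong exchange `x` drops one letter from a word for `t x` ending in `r`; dropping any
  -- letter but that last `r` would make `x r` shorter than `t x r`.
  obtain ⟨ω, hω, hωy⟩ := cs.exists_isReduced (t * x * σ r)
  have hy : π (ω.concat r) = t * x := by
    rw [wordProd_concat, ← hωy, cs.simple_mul_simple_cancel_right]
  have hyx : π (ω.concat r) * ((t * x)⁻¹ * t * (t * x)) = x := by
    rw [hy, show t * x * ((t * x)⁻¹ * t * (t * x)) = t * t * x by group, ht.mul_self, one_mul]
  have hmem : (t * x)⁻¹ * t * (t * x) ∈ ris (ω.concat r) := by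
    refine mem_rightInvSeq_of_length_mul_lt cs (by simpa using ht.conj (t * x)⁻¹) ?_
    rwa [hyx, hy]
  rw [rightInvSeq_concat, List.concat_eq_append, List.mem_append, List.mem_singleton,
    List.mem_map] at hmem
  rcases hmem with ⟨u, hu, hconj⟩ | hsimple
  · have hxr : x * σ r = π ω * u := by
      rw [← hyx, ← hconj, hy, ← hωy, MulAut.conj_apply, cs.inv_simple]
      simp only [mul_assoc, cs.simple_mul_simple_self, mul_one]
    have := (cs.isRightInversion_of_mem_rightInvSeq hω hu).2
    rw [← hxr, ← hωy] at this
    omega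
  · rw [hsimple, hy] at hyx
    exact hyx.symm

theorem brLe_mul_simple_or_eq_of_isReflection_mul {x t : W} (r : B) (ht : cs.IsReflection t)
    (hx : ℓ x < ℓ (t * x)) : BrLe cs (x * σ r) (t * x * σ r) ∨ x = t * x * σ r := by
  rcases lt_or_gt_of_ne (ht.length_mul_right_ne (x * σ r)) with hr | hr
  · exact .inr (eq_mul_simple_of_isReflection_mul cs ht hx (by rwa [mul_assoc]))
  · left
    rw [mul_assoc]
    exact brLe_isReflection_mul cs ht hr.le

variable {cs}

theorem BrLe.mul_simple_or {x y : W} (h : BrLe cs x y) (r : B) :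
    BrLe cs (x * σ r) (y * σ r) ∨ (BrLe cs (x * σ r) y ∧ BrLe cs x (y * σ r)) := by
  induction h with
  | refl => exact .inl (.refl cs _)
  | @tail x' y hxx' hstep ih =>
    obtain ⟨hlen, t, ht | rfl, rfl⟩ := hstep
    · have hx't : BrLe cs x' (t * x') := brLe_isReflection_mul cs ht hlen
      have hlt : ℓ x' < ℓ (t * x') := lt_of_le_of_ne hlen (ht.length_mul_right_ne x').symm
      rcases brLe_mul_simple_or_eq_of_isReflection_mul cs r ht hlt, ih with
        ⟨hstep | heq, hle | ⟨hle₁, hle₂⟩⟩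
      · exact .inl (hle.trans hstep)
      · exact .inr ⟨hle₁.trans hx't, hle₂.trans hstep⟩
      · refine .inr ⟨?_, heq ▸ hxx'⟩
        rwa [heq, cs.simple_mul_simple_cancel_right] at hle
      · exact .inr ⟨hle₁.trans hx't, heq ▸ hxx'⟩
    · simpa only [one_mul] using ih

theorem BrLe.mul_simple_of_ascent {x y : W} {r : B} (h : BrLe cs x y)
    (hy : ℓ y < ℓ (y * σ r)) : BrLe cs (x * σ r) (y * σ r) :=
  (h.mul_simple_or r).elim id fun h' ↦ h'.1.trans (brLe_mul_simple cs hy)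

theorem BrLe.le_mul_simple_of_ascent {x y : W} {r : B} (h : BrLe cs x y)
    (hx : ℓ x < ℓ (x * σ r)) : BrLe cs x (y * σ r) :=
  (h.mul_simple_or r).elim (brLe_mul_simple cs hx).trans And.right

theorem BrLe.mul_simple_of_descent {x y : W} {r : B} (h : BrLe cs x y)
    (hx : ℓ (x * σ r) < ℓ x) : BrLe cs (x * σ r) (y * σ r) :=
  ((mul_simple_brLe cs hx).trans h).le_mul_simple_of_ascent
    (by rwa [cs.simple_mul_simple_cancel_right])

theorem WkLe.length_mul_simple_lt {w u : W} {r : B} (h : WkLe cs w u)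
    (hr : ℓ (w * σ r) < ℓ w) : ℓ (u * σ r) < ℓ u := by
  have h' : ℓ (u * w⁻¹) + ℓ w = ℓ u := h
  calc ℓ (u * σ r) = ℓ (u * w⁻¹ * (w * σ r)) := by rw [show u * w⁻¹ * (w * σ r) = u * σ r by group]
    _ ≤ ℓ (u * w⁻¹) + ℓ (w * σ r) := cs.length_mul_le _ _
    _ < ℓ u := by omega

theorem WkLe.mul_simple {w u : W} {r : B} (h : WkLe cs w u) (hr : ℓ (w * σ r) < ℓ w) :
    WkLe cs (w * σ r) (u * σ r) := by
  have h' : ℓ (u * w⁻¹) + ℓ w = ℓ u := h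
  have hu := h.length_mul_simple_lt hr
  have := cs.length_mul_simple w r
  have := cs.length_mul_simple u r
  show ℓ (u * σ r * (w * σ r)⁻¹) + ℓ (w * σ r) = ℓ (u * σ r)
  rw [show u * σ r * (w * σ r)⁻¹ = u * w⁻¹ by group]
  omega

theorem WkLe.le_mul_simple {y u : W} {r : B} (h : WkLe cs y u) (hu : ℓ (u * σ r) < ℓ u)
    (hy : ℓ y < ℓ (y * σ r)) : WkLe cs y (u * σ r) := by
  have h' : ℓ (u * y⁻¹) + ℓ y = ℓ u := h
  have hsimple {v : W} := inversionSign_eq_neg_one_iff cs (w := v) (cs.isReflection_simple r)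
  have hy' : inversionSign cs y (σ r) = 1 :=
    (Int.units_eq_one_or _).resolve_right fun h ↦ by have := hsimple.mp h; omega
  -- `σ r` is an inversion of `u = (u y⁻¹) y` but not of `y`, so the cocycle identity makes
  -- `y σ r y⁻¹` an inversion of `u y⁻¹`.
  have hsign := inversionSign_mul cs (u * y⁻¹) y (σ r)
  rw [inv_mul_cancel_right, hsimple.mpr hu, hy', mul_one, eq_comm,
    inversionSign_eq_neg_one_iff cs ((cs.isReflection_simple r).conj y),
    show u * y⁻¹ * (y * σ r * y⁻¹) = u * σ r * y⁻¹ by group] at hsign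
  have := cs.length_mul_simple u r
  have := cs.length_mul_le (u * σ r * y⁻¹) y
  rw [inv_mul_cancel_right] at this
  show ℓ (u * σ r * y⁻¹) + ℓ y = ℓ (u * σ r)
  omega

theorem WkLe.simple_mul {w u : W} {s : B} (h : WkLe cs w u) (hsw : ℓ w < ℓ (σ s * w))
    (hv : ℓ (u * w⁻¹ * σ s) < ℓ (u * w⁻¹)) : WkLe cs (σ s * w) u := by
  have h' : ℓ (u * w⁻¹) + ℓ w = ℓ u := h
  have := cs.length_mul_simple (u * w⁻¹) s
  have := cs.length_simple_mul w s
  show ℓ (u * (σ s * w)⁻¹) + ℓ (σ s * w) = ℓ u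
  rw [mul_inv_rev, cs.inv_simple, ← mul_assoc]
  omega

theorem WkLe.exists_ascent_brLe_mul_simple {y u z : W} {r : B} (hy : WkLe cs y u)
    (hu : ℓ (u * σ r) < ℓ u) (hle : BrLe cs y z) :
    ∃ y', WkLe cs y' (u * σ r) ∧ ℓ y' < ℓ (y' * σ r) ∧ BrLe cs y' (z * σ r) ∧
      BrLe cs y (y' * σ r) := by
  rcases cs.length_mul_simple y r with hasc | hdesc
  · exact ⟨y, hy.le_mul_simple hu (by omega), by omega, hle.le_mul_simple_of_ascent (by omega),
      brLe_mul_simple cs (by omega)⟩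
  · refine ⟨y * σ r, hy.mul_simple (by omega), ?_, hle.mul_simple_of_descent (by omega), ?_⟩ <;>
      rw [cs.simple_mul_simple_cancel_right]
    · omega
    · exact .refl cs y

theorem brLe_of_wkLe_of_brLe_simple_mul {u w y : W} {s : B} (hw : WkLe cs w u)
    (hv : ℓ (u * w⁻¹) < ℓ (u * w⁻¹ * σ s)) (hy : WkLe cs y u) (hle : BrLe cs y (σ s * w)) :
    BrLe cs y w := by
  induction hn : ℓ w generalizing u w y with
  | zero =>
    obtain rfl := cs.length_eq_zero_iff.mp hn
    simp only [mul_one, inv_one] at hle hv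
    obtain rfl : y = 1 := by
      by_contra hy1
      have := cs.length_eq_zero_iff.not.mpr hy1
      have := hle.length_le
      obtain rfl : y = σ s := hle.eq_of_length_le (by rw [cs.length_simple] at *; omega)
      have hy' : ℓ (u * (σ s)⁻¹) + ℓ (σ s) = ℓ u := hy
      rw [cs.inv_simple, cs.length_simple] at hy'
      omega
    exact .refl cs 1
  | succ n ih =>
    obtain ⟨r, hr⟩ := cs.exists_rightDescent_of_ne_one (w := w) (by rintro rfl; simp at hn)
    have hr : ℓ (w * σ r) < ℓ w := hr
    obtain ⟨y', hy'u, hy'r, hy's, hyy'⟩ :=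
      hy.exists_ascent_brLe_mul_simple (hw.length_mul_simple_lt hr) hle
    have hy'w : BrLe cs y' (w * σ r) :=
      ih (hw.mul_simple hr) (by rwa [show u * σ r * (w * σ r)⁻¹ = u * w⁻¹ by group]) hy'u
        (by rwa [mul_assoc] at hy's) (by have := cs.length_mul_simple w r; omega)
    have hw' := hy'w.mul_simple_of_ascent (r := r) (by rwa [cs.simple_mul_simple_cancel_right])
    rw [cs.simple_mul_simple_cancel_right] at hw'
    exact hyy'.trans hw'

end

theorem stmt14 (u : W) (J : Set B)
    (w : W) (hw : WkLe cs w u) (s : B)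
    (hwa : WA cs {w : W | WkLe cs w u} J s w)
    (y : W) (hy : WkLe cs y u)
    (hlt : BrLt cs y (cs.simple s * w)) :
    BrLe cs y w := by
  refine brLe_of_wkLe_of_brLe_simple_mul hw ?_ hy hlt.1
  by_contra hv
  have := cs.length_mul_simple (u * w⁻¹) s
  exact hwa.2.2 (hw.simple_mul hwa.1 (by omega))

end WGI
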